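/- arXiv:0806.3990 — 2 statements merged into one kernel-verified Lean document; each statement's English description precedes it below -/
import Mathlib

section
/- There exists an absolute constant C > 0 such that for all sufficiently large positive integers k and every positive integer m, \int_0^1 (\sin(\pi m t)/\sin(\pi t))^{2k} dt \ge C m^{2k-1}/\sqrt{k}. -/
/-!
The integrand is at most `m ^ (2k)` everywhere, and it stays within a constant factor of that
maximum on the window `0 < t ≤ 1 / (π m √k)`: there `sin (π m t) ≥ π m t (1 - (π m t)² / 6)` and
`sin (π t) ≤ π t` give a ratio of at least `m (1 - 1 / (6k))`, whose `2k`-th power is at least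
`(2/3) m ^ (2k)` by Bernoulli's inequality. Integrating over the window, of length `1 / (π m √k)`,
gives the bound with `C = 2 / (3π)`.
-/

open Real intervalIntegral
open MeasureTheory (volume)

lemma abs_sin_nat_mul_le (n : ℕ) (x : ℝ) : |sin (n * x)| ≤ n * |sin x| := by
  induction n with
  | zero => simp
  | succ n ih =>
    calc |sin ((n + 1 : ℕ) * x)| = |sin (n * x) * cos x + cos (n * x) * sin x| := by
          push_cast; rw [add_mul, one_mul, sin_add]
      _ ≤ |sin (n * x)| * |cos x| + |cos (n * x)| * |sin x| := by
          rw [← abs_mul, ← abs_mul]; exact abs_add_le _ _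
      _ ≤ n * |sin x| * 1 + 1 * |sin x| := by
          gcongr
          exacts [abs_cos_le_one _, abs_cos_le_one _]
      _ = (n + 1 : ℕ) * |sin x| := by push_cast; ring

lemma abs_sin_nat_mul_div_sin_le (n : ℕ) (x : ℝ) : |sin (n * x) / sin x| ≤ n := by
  rcases eq_or_ne (sin x) 0 with hx | hx
  · simp [hx]
  · rw [abs_div, div_le_iff₀ (abs_pos.mpr hx)]
    exact abs_sin_nat_mul_le n x

lemma mul_one_sub_sq_le_sin_mul_div_sin {m y : ℝ} (hm : 0 < m) (hy : 0 < y) (hyπ : y < π)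
    (hmy : (m * y) ^ 2 ≤ 6) : m * (1 - (m * y) ^ 2 / 6) ≤ sin (m * y) / sin y := by
  have hsin_pos : 0 < sin y := sin_pos_of_pos_of_lt_pi hy hyπ
  have hnum : m * y * (1 - (m * y) ^ 2 / 6) ≤ sin (m * y) := by
    have := sin_gt_sub_cube (mul_pos hm hy)
    linarith
  rw [le_div_iff₀ hsin_pos]
  calc m * (1 - (m * y) ^ 2 / 6) * sin y ≤ m * (1 - (m * y) ^ 2 / 6) * y := by
        have : 0 ≤ 1 - (m * y) ^ 2 / 6 := by linarith
        gcongr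
        exact (sin_lt hy).le
    _ = m * y * (1 - (m * y) ^ 2 / 6) := by ring
    _ ≤ sin (m * y) := hnum

lemma two_thirds_le_one_sub_pow (k : ℕ) : (2 / 3 : ℝ) ≤ (1 - 1 / (6 * k)) ^ (2 * k) := by
  rcases Nat.eq_zero_or_pos k with rfl | hk
  · norm_num
  have hbernoulli := one_add_mul_le_pow (a := -(1 / (6 * k : ℝ))) (by
    have : (1 / (6 * k : ℝ)) ≤ 1 := by
      rw [div_le_one (by positivity)]; norm_cast; omega
    linarith) (2 * k)
  have hk' : (k : ℝ) ≠ 0 := by positivity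
  calc (2 / 3 : ℝ) = 1 + (2 * k : ℕ) * -(1 / (6 * k : ℝ)) := by push_cast; field_simp; ring
    _ ≤ _ := hbernoulli
    _ = _ := by ring

lemma two_thirds_mul_pow_le_sin_ratio_pow {k m : ℕ} (hk : 0 < k) (hm : 0 < m) {t : ℝ}
    (ht : 0 < t) (htb : t ≤ 1 / (π * m * √k)) :
    2 / 3 * (m : ℝ) ^ (2 * k) ≤ (sin (π * m * t) / sin (π * t)) ^ (2 * k) := by
  have hk1 : (1 : ℝ) ≤ k := by exact_mod_cast hk
  have hm1 : (1 : ℝ) ≤ m := by exact_mod_cast hm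
  have hsq : (π * m * t) ^ 2 * k ≤ 1 := by
    rw [le_div_iff₀ (by positivity)] at htb
    calc (π * m * t) ^ 2 * k = (t * (π * m * √k)) ^ 2 := by
          rw [mul_pow t, mul_pow _ √k, sq_sqrt k.cast_nonneg]; ring
      _ ≤ 1 := pow_le_one₀ (by positivity) htb
  have hsq1 : (π * m * t) ^ 2 ≤ 1 := by nlinarith
  have hπt : π * t < π := by
    have : π * t ≤ π * m * t := by
      rw [mul_right_comm]; exact le_mul_of_one_le_right (by positivity) hm1
    nlinarith [pi_gt_three]
  have hmy : (m : ℝ) * (π * t) = π * m * t := by ring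
  have hratio := mul_one_sub_sq_le_sin_mul_div_sin (m := m) (by positivity) (by positivity) hπt
    (by rw [hmy]; linarith)
  rw [hmy] at hratio
  have hbase : (m : ℝ) * (1 - 1 / (6 * k)) ≤ sin (π * m * t) / sin (π * t) := by
    refine le_trans (mul_le_mul_of_nonneg_left ?_ (Nat.cast_nonneg m)) hratio
    have : (π * m * t) ^ 2 / 6 ≤ 1 / (6 * k) := by
      rw [div_le_div_iff₀ (by norm_num) (by positivity)]
      linarith
    linarith
  calc 2 / 3 * (m : ℝ) ^ (2 * k) ≤ (1 - 1 / (6 * k)) ^ (2 * k) * (m : ℝ) ^ (2 * k) := by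
        gcongr; exact two_thirds_le_one_sub_pow k
    _ = ((m : ℝ) * (1 - 1 / (6 * k))) ^ (2 * k) := by rw [mul_pow, mul_comm]
    _ ≤ _ := by
        have : (0 : ℝ) ≤ 1 - 1 / (6 * k) := by
          have : 1 / (6 * k : ℝ) ≤ 1 := div_le_one_of_le₀ (by linarith) (by positivity)
          linarith
        gcongr

lemma intervalIntegrable_sin_ratio_pow (m n : ℕ) (a b : ℝ) :
    IntervalIntegrable (fun t => (sin (π * m * t) / sin (π * t)) ^ n) volume a b := by
  refine (intervalIntegrable_const (c := (m : ℝ) ^ n)).mono_fun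
    (Measurable.aestronglyMeasurable (by fun_prop)) (Filter.Eventually.of_forall fun t => ?_)
  dsimp only
  rw [norm_pow, norm_pow, Real.norm_eq_abs, Real.norm_eq_abs, Nat.abs_cast]
  gcongr
  have h := abs_sin_nat_mul_div_sin_le m (π * t)
  rwa [← mul_assoc, mul_comm (m : ℝ) π] at h

theorem fejer_integral_lower_bound :
    ∃ C : ℝ, 0 < C ∧ ∃ k₀ : ℕ, ∀ k : ℕ, k₀ ≤ k → ∀ m : ℕ, 0 < m →
      C * (m : ℝ) ^ (2 * k - 1) / Real.sqrt k ≤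
        ∫ t in (0:ℝ)..1, (Real.sin (Real.pi * m * t) / Real.sin (Real.pi * t)) ^ (2 * k) := by
  refine ⟨2 / (3 * π), by positivity, 1, fun k hk m hm => ?_⟩
  have hk1 : (1 : ℝ) ≤ √k := one_le_sqrt.mpr (by exact_mod_cast hk)
  have hm1 : (1 : ℝ) ≤ m := by exact_mod_cast hm
  set b := 1 / (π * m * √k) with hb
  have hb0 : 0 < b := by positivity
  have hb1 : b ≤ 1 := by
    refine div_le_one_of_le₀ ?_ (by positivity)
    nlinarith [pi_gt_three, mul_le_mul hm1 hk1 zero_le_one (by positivity)]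
  calc 2 / (3 * π) * (m : ℝ) ^ (2 * k - 1) / √k
        = ∫ _ in (0 : ℝ)..b, 2 / 3 * (m : ℝ) ^ (2 * k) := by
        rw [integral_const, smul_eq_mul, sub_zero, hb, ← pow_sub_one_mul (by omega : 2 * k ≠ 0)]
        field_simp
    _ ≤ ∫ t in (0 : ℝ)..b, (sin (π * m * t) / sin (π * t)) ^ (2 * k) :=
        integral_mono_on_of_le_Ioo hb0.le intervalIntegrable_const
          (intervalIntegrable_sin_ratio_pow m _ _ _) fun t ht =>
            two_thirds_mul_pow_le_sin_ratio_pow hk hm ht.1 ht.2.le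
    _ ≤ ∫ t in (0 : ℝ)..1, (sin (π * m * t) / sin (π * t)) ^ (2 * k) :=
        integral_mono_interval le_rfl hb0.le hb1
          (Filter.Eventually.of_forall fun t => (even_two_mul k).pow_nonneg _)
          (intervalIntegrable_sin_ratio_pow m _ _ _)
end

section
/- For every real r with 0 < r < 2 and r \ne 1, and every real x, |x|^r = (1/K(r)) \int_{-\infty}^{\infty} \sin^2(xt/2) / |t|^{r+1} dt, where K(r) = (\Gamma(2-r)/(r(1-r))) \sin((1-r)\pi/2). -/
/-! Since sin²(xt/2) = (1 - cos (xt))/2, evenness and the substitution t ↦ |x| t reduce the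
claim to computing C(r) = ∫₀^∞ (1 - cos t) t^(-r-1) dt. Inserting
Γ(r+1) t^(-r-1) = ∫₀^∞ u^r e^(-tu) du and the Laplace transform
∫₀^∞ (1 - cos t) e^(-ut) dt = 1/(u(1+u²)), Fubini gives
Γ(r+1) C(r) = ∫₀^∞ u^(r-1)/(1+u²) du; writing 1/(1+u²) = ∫₀^∞ e^(-(1+u²)v) dv and swapping
again, this is Γ(r/2) Γ(1-r/2)/2 = π/(2 sin(πr/2)). The reflection formula shows that the
constant Γ(2-r)/(r(1-r)) · sin((1-r)π/2) of the statement is the same number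
π/(2 sin(πr/2) Γ(r+1)). -/

open MeasureTheory Real Set Filter Asymptotics Topology

theorem integral_integral_swap_of_nonneg {α β : Type*} [MeasurableSpace α] [MeasurableSpace β]
    {μ : Measure α} {ν : Measure β} [SFinite μ] [SFinite ν] {F : α → β → ℝ}
    (hF : AEStronglyMeasurable (Function.uncurry F) (μ.prod ν))
    (hF_nonneg : ∀ᵐ x ∂μ, ∀ᵐ y ∂ν, 0 ≤ F x y)
    (hF_sec : ∀ᵐ x ∂μ, Integrable (F x) ν)
    (hF_int : Integrable (fun x => ∫ y, F x y ∂ν) μ) :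
    ∫ x, ∫ y, F x y ∂ν ∂μ = ∫ y, ∫ x, F x y ∂μ ∂ν := by
  refine integral_integral_swap ((integrable_prod_iff hF).2 ⟨hF_sec, hF_int.congr ?_⟩)
  filter_upwards [hF_nonneg] with x hx
  exact integral_congr_ae (hx.mono fun y hy => (norm_of_nonneg hy).symm)

theorem integrableOn_one_sub_cos_div_rpow {s : ℝ} (hs1 : 1 < s) (hs3 : s < 3) :
    IntegrableOn (fun t : ℝ => (1 - cos t) / t ^ s) (Ioi 0) := by
  have hloc : LocallyIntegrableOn (fun t : ℝ => 1 - cos t) (Ioi 0) :=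
    (continuous_const.sub continuous_cos).locallyIntegrable.locallyIntegrableOn _
  have htop : (fun t : ℝ => 1 - cos t) =O[atTop] (· ^ (-(0 : ℝ))) := by
    refine IsBigO.of_bound 2 (Eventually.of_forall fun t => ?_)
    rw [neg_zero, rpow_zero, norm_one, mul_one, norm_of_nonneg (by linarith [cos_le_one t])]
    linarith [neg_one_le_cos t]
  have hbot : (fun t : ℝ => 1 - cos t) =O[𝓝[>] 0] (· ^ (-(-2 : ℝ))) := by
    refine IsBigO.of_bound 1 (Eventually.of_forall fun t => ?_)
    rw [neg_neg, rpow_two, norm_of_nonneg (by linarith [cos_le_one t]),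
      norm_of_nonneg (sq_nonneg t)]
    nlinarith [one_sub_sq_div_two_le_cos (x := t), sq_nonneg t]
  refine (mellin_convergent_of_isBigO_scalar hloc htop (s := 1 - s) (by linarith) hbot
    (by linarith)).congr_fun (fun t ht => ?_) measurableSet_Ioi
  dsimp only
  rw [sub_sub_cancel_left, rpow_neg (le_of_lt ht), div_eq_inv_mul]

theorem integrableOn_rpow_div_one_add_sq {s : ℝ} (hs0 : 0 < s) (hs2 : s < 2) :
    IntegrableOn (fun u : ℝ => u ^ (s - 1) / (1 + u ^ 2)) (Ioi 0) := by
  have hloc : LocallyIntegrableOn (fun u : ℝ => (1 + u ^ 2)⁻¹) (Ioi 0) :=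
    integrable_inv_one_add_sq.locallyIntegrable.locallyIntegrableOn _
  have htop : (fun u : ℝ => (1 + u ^ 2)⁻¹) =O[atTop] (· ^ (-(2 : ℝ))) := by
    refine IsBigO.of_bound 1 ((eventually_gt_atTop 0).mono fun u hu => ?_)
    rw [rpow_neg hu.le, rpow_two, one_mul, norm_inv, norm_inv, norm_of_nonneg (by positivity),
      norm_of_nonneg (by positivity)]
    exact inv_anti₀ (by positivity) (by linarith)
  have hbot : (fun u : ℝ => (1 + u ^ 2)⁻¹) =O[𝓝[>] 0] (· ^ (-(0 : ℝ))) := by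
    refine IsBigO.of_bound 1 (Eventually.of_forall fun u => ?_)
    rw [neg_zero, rpow_zero, norm_one, mul_one, norm_inv, norm_of_nonneg (by positivity)]
    exact inv_le_one_of_one_le₀ (by nlinarith)
  exact (mellin_convergent_of_isBigO_scalar hloc htop hs2 hbot hs0).congr_fun
    (fun u _ => (div_eq_mul_inv _ _).symm) measurableSet_Ioi

theorem integral_one_sub_cos_mul_exp_neg_mul_Ioi {u : ℝ} (hu : 0 < u) :
    ∫ t in Ioi 0, (1 - cos t) * exp (-u * t) = 1 / (u * (1 + u ^ 2)) := by
  set a : ℂ := -u + Complex.I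
  have ha : a.re < 0 := by simpa [a] using hu
  have hre : ∀ t : ℝ, RCLike.re (Complex.exp (a * t)) = cos t * exp (-u * t) := fun t => by
    simp [a, Complex.exp_re, mul_comm]
  have hcos_int : IntegrableOn (fun t => cos t * exp (-u * t)) (Ioi 0) := by
    simpa only [IntegrableOn, hre] using (integrableOn_exp_mul_complex_Ioi ha 0).re
  have hcos : ∫ t in Ioi 0, cos t * exp (-u * t) = u / (1 + u ^ 2) := by
    simp_rw [← hre]
    rw [integral_re (integrableOn_exp_mul_complex_Ioi ha 0), integral_exp_mul_complex_Ioi ha 0]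
    simp only [a, Complex.ofReal_zero, mul_zero, Complex.exp_zero, RCLike.re_to_complex,
      Complex.div_re, Complex.normSq_apply, Complex.neg_re, Complex.neg_im, Complex.add_re,
      Complex.add_im, Complex.ofReal_re, Complex.ofReal_im, Complex.I_re, Complex.I_im,
      Complex.one_re, Complex.one_im]
    field_simp
    ring
  have hexp : ∫ t in Ioi 0, exp (-u * t) = 1 / u := by
    rw [integral_exp_mul_Ioi (by linarith) 0]
    simp
  simp_rw [sub_mul, one_mul]
  rw [integral_sub (integrableOn_exp_mul_Ioi (by linarith) 0) hcos_int, hexp, hcos]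
  field_simp
  ring

theorem Gamma_mul_integral_one_sub_cos_div_rpow {r : ℝ} (hr0 : 0 < r) (hr2 : r < 2) :
    Gamma (r + 1) * ∫ t in Ioi 0, (1 - cos t) / t ^ (r + 1) =
      ∫ u in Ioi 0, u ^ (r - 1) / (1 + u ^ 2) := by
  set F : ℝ → ℝ → ℝ := fun t u => (1 - cos t) * (u ^ r * exp (-(t * u)))
  have hF_sec : ∀ t ∈ Ioi (0 : ℝ), IntegrableOn (F t) (Ioi 0) := fun t ht =>
    ((integrableOn_rpow_mul_exp_neg_mul_rpow (by linarith) one_pos ht).congr_fun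
      (fun u _ => by simp only [rpow_one, neg_mul]) measurableSet_Ioi).const_mul _
  have hF_int : ∀ t ∈ Ioi (0 : ℝ),
      ∫ u in Ioi 0, F t u = Gamma (r + 1) * ((1 - cos t) / t ^ (r + 1)) := fun t ht => by
    have := integral_rpow_mul_exp_neg_mul_Ioi (a := r + 1) (by linarith) ht
    rw [add_sub_cancel_right] at this
    rw [integral_const_mul, this, one_div, inv_rpow ht.le]
    ring
  have hswap := integral_integral_swap_of_nonneg (F := F)
    (μ := volume.restrict (Ioi 0)) (ν := volume.restrict (Ioi 0))
    (by fun_prop)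
    (ae_restrict_of_forall_mem measurableSet_Ioi fun t _ =>
      ae_restrict_of_forall_mem measurableSet_Ioi fun u (hu : 0 < u) =>
        mul_nonneg (by linarith [cos_le_one t]) (by positivity))
    (ae_restrict_of_forall_mem measurableSet_Ioi hF_sec)
    (((integrableOn_one_sub_cos_div_rpow (by linarith) (by linarith)).const_mul _).congr
      (ae_restrict_of_forall_mem measurableSet_Ioi fun t ht => (hF_int t ht).symm))
  calc Gamma (r + 1) * ∫ t in Ioi 0, (1 - cos t) / t ^ (r + 1)
      = ∫ t in Ioi 0, ∫ u in Ioi 0, F t u := by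
        rw [← integral_const_mul]
        exact setIntegral_congr_fun measurableSet_Ioi fun t ht => (hF_int t ht).symm
    _ = ∫ u in Ioi 0, ∫ t in Ioi 0, F t u := hswap
    _ = ∫ u in Ioi 0, u ^ (r - 1) / (1 + u ^ 2) := by
        refine setIntegral_congr_fun measurableSet_Ioi fun u (hu : 0 < u) => ?_
        have : ∀ t, F t u = u ^ r * ((1 - cos t) * exp (-u * t)) := fun t => by
          simp only [F]; ring_nf
        simp_rw [this]
        rw [integral_const_mul, integral_one_sub_cos_mul_exp_neg_mul_Ioi hu,
          rpow_sub_one hu.ne']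
        field_simp

theorem integral_rpow_div_one_add_sq {r : ℝ} (hr0 : 0 < r) (hr2 : r < 2) :
    ∫ u in Ioi 0, u ^ (r - 1) / (1 + u ^ 2) = π / (2 * sin (π * r / 2)) := by
  set G : ℝ → ℝ → ℝ := fun u v => u ^ (r - 1) * exp (-(1 + u ^ 2) * v)
  have hG_sec : ∀ u ∈ Ioi (0 : ℝ), IntegrableOn (G u) (Ioi 0) := fun u _ =>
    (integrableOn_exp_mul_Ioi (by nlinarith) 0).const_mul _
  have hG_int : ∀ u ∈ Ioi (0 : ℝ), ∫ v in Ioi 0, G u v = u ^ (r - 1) / (1 + u ^ 2) :=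
    fun u _ => by
      rw [integral_const_mul, integral_exp_mul_Ioi (by nlinarith) 0, mul_zero, exp_zero,
        neg_div_neg_eq, mul_one_div]
  have hswap := integral_integral_swap_of_nonneg (F := G)
    (μ := volume.restrict (Ioi 0)) (ν := volume.restrict (Ioi 0))
    (by fun_prop)
    (ae_restrict_of_forall_mem measurableSet_Ioi fun u (hu : 0 < u) =>
      ae_restrict_of_forall_mem measurableSet_Ioi fun v _ => by positivity)
    (ae_restrict_of_forall_mem measurableSet_Ioi hG_sec)
    ((integrableOn_rpow_div_one_add_sq hr0 hr2).congr
      (ae_restrict_of_forall_mem measurableSet_Ioi fun u hu => (hG_int u hu).symm))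
  calc ∫ u in Ioi 0, u ^ (r - 1) / (1 + u ^ 2)
      = ∫ u in Ioi 0, ∫ v in Ioi 0, G u v :=
        setIntegral_congr_fun measurableSet_Ioi fun u hu => (hG_int u hu).symm
    _ = ∫ v in Ioi 0, ∫ u in Ioi 0, G u v := hswap
    _ = ∫ v in Ioi 0, Gamma (r / 2) / 2 * (exp (-v) * v ^ (1 - r / 2 - 1)) := by
        refine setIntegral_congr_fun measurableSet_Ioi fun v (hv : 0 < v) => ?_
        have : ∀ u, G u v = exp (-v) * (u ^ (r - 1) * exp (-v * u ^ (2 : ℝ))) := fun u => by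
          rw [rpow_two, mul_left_comm, ← exp_add]; simp only [G]; ring_nf
        simp_rw [this]
        rw [integral_const_mul, integral_rpow_mul_exp_neg_mul_rpow two_pos (by linarith) hv]
        rw [sub_add_cancel, show -r / 2 = 1 - r / 2 - 1 by ring]
        ring
    _ = π / (2 * sin (π * r / 2)) := by
        rw [integral_const_mul, ← Gamma_eq_integral (by linarith), div_mul_eq_mul_div,
          Gamma_mul_Gamma_one_sub, div_div, mul_comm, mul_div_assoc]

theorem integral_one_sub_cos_div_rpow {r : ℝ} (hr0 : 0 < r) (hr2 : r < 2) :
    ∫ t in Ioi 0, (1 - cos t) / t ^ (r + 1) = π / (2 * sin (π * r / 2)) / Gamma (r + 1) := by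
  rw [← integral_rpow_div_one_add_sq hr0 hr2,
    ← Gamma_mul_integral_one_sub_cos_div_rpow hr0 hr2,
    mul_div_cancel_left₀ _ (Gamma_pos_of_pos (by linarith)).ne']

theorem integral_Ioi_comp_mul_div_rpow (f : ℝ → ℝ) {y : ℝ} (hy : 0 < y) (s : ℝ) :
    ∫ t in Ioi 0, f (y * t) / t ^ s = y ^ (s - 1) * ∫ t in Ioi 0, f t / t ^ s := by
  have : ∀ t ∈ Ioi (0 : ℝ), f (y * t) / t ^ s = y ^ s * (f (y * t) / (y * t) ^ s) :=
    fun t (ht : 0 < t) => by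
      rw [mul_rpow hy.le ht.le]
      field_simp
  rw [setIntegral_congr_fun measurableSet_Ioi this, integral_const_mul,
    integral_comp_mul_left_Ioi (fun t => f t / t ^ s) 0 hy, mul_zero, smul_eq_mul, ← mul_assoc,
    rpow_sub_one hy.ne', div_eq_mul_inv]

theorem integral_sin_sq_div_abs_rpow {r : ℝ} (hr : r ≠ 0) (x : ℝ) :
    ∫ t, sin (x * t / 2) ^ 2 / |t| ^ (r + 1) =
      |x| ^ r * ∫ t in Ioi 0, (1 - cos t) / t ^ (r + 1) := by
  rcases eq_or_ne x 0 with rfl | hx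
  · simp [zero_rpow hr]
  have : ∀ t, sin (x * t / 2) ^ 2 / |t| ^ (r + 1) = (1 - cos (|x| * |t|)) / |t| ^ (r + 1) / 2 :=
    fun t => by
      rw [← abs_mul, cos_abs, sin_sq_eq_half_sub, mul_div_cancel₀ _ two_ne_zero]
      ring
  simp_rw [this]
  rw [integral_div, integral_comp_abs (f := fun t => (1 - cos (|x| * t)) / t ^ (r + 1)),
    integral_Ioi_comp_mul_div_rpow (fun t => 1 - cos t) (abs_pos.2 hx), add_sub_cancel_right]
  ring

theorem Gamma_two_sub_div_mul_sin {r : ℝ} (hr0 : 0 < r) (hr2 : r < 2) (hr1 : r ≠ 1) :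
    Gamma (2 - r) / (r * (1 - r)) * sin ((1 - r) * π / 2) =
      π / (2 * sin (π * r / 2)) / Gamma (r + 1) := by
  have h1r : 1 - r ≠ 0 := sub_ne_zero.2 hr1.symm
  have hS : sin ((1 - r) * π / 2) ≠ 0 := by
    rw [Ne, sin_eq_zero_iff_of_lt_of_lt (by nlinarith [pi_pos]) (by nlinarith [pi_pos])]
    exact div_ne_zero (mul_ne_zero h1r pi_ne_zero) two_ne_zero
  have hΓ : 0 < Gamma r := Gamma_pos_of_pos hr0
  have hsin : sin (π * r) = 2 * sin (π * r / 2) * sin ((1 - r) * π / 2) := by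
    rw [show (1 - r) * π / 2 = π / 2 - π * r / 2 by ring, sin_pi_div_two_sub,
      ← sin_two_mul, mul_div_cancel₀ _ two_ne_zero]
  have hΓ1 : Gamma (1 - r) = π / (2 * sin (π * r / 2) * sin ((1 - r) * π / 2) * Gamma r) := by
    rw [← hsin, mul_comm, ← div_div, div_right_comm, ← Gamma_mul_Gamma_one_sub,
      mul_div_cancel_left₀ _ hΓ.ne']
  rw [show 2 - r = 1 - r + 1 by ring, Gamma_add_one h1r, Gamma_add_one hr0.ne', hΓ1]
  field_simp

theorem levy_representation (r : ℝ) (hr0 : 0 < r) (hr2 : r < 2) (hr1 : r ≠ 1) (x : ℝ) :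
    |x| ^ r =
      (1 / ((Real.Gamma (2 - r) / (r * (1 - r))) * Real.sin ((1 - r) * Real.pi / 2))) *
        ∫ t : ℝ, Real.sin (x * t / 2) ^ 2 / |t| ^ (r + 1) := by
  have hs : 0 < sin (π * r / 2) := sin_pos_of_pos_of_lt_pi (by positivity) (by nlinarith [pi_pos])
  have hΓ : 0 < Gamma (r + 1) := Gamma_pos_of_pos (by linarith)
  rw [Gamma_two_sub_div_mul_sin hr0 hr2 hr1, integral_sin_sq_div_abs_rpow hr0.ne' x,
    integral_one_sub_cos_div_rpow hr0 hr2]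
  field_simp
end
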